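/- Let G be a finitely generated group and (d_i) a sequence of G-equivariant pseudometrics on G induced by based actions on δ_i-hyperbolic spaces. If ℓ_i denotes the sum over a fixed finite generating set S of d_i(1, s), and δ_i/ℓ_i → 0, then the rescaled pseudometrics d_i/ℓ_i have a subsequence converging (pointwise on G × G) to a pseudometric which is 0-hyperbolic, i.e., the limit pseudometric satisfies the four-point condition of real trees. -/

import Mathlib

/-!
Equivariance and the triangle inequality make `g ↦ dᵢ(1, g)` subadditive, so writing `g` as a word
in `S` bounds `dᵢ(1, g) / ℓᵢ` uniformly in `i`. A finitely generated group is countable, hence the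
rescaled pseudometrics lie in a compact metrizable product of intervals indexed by `G × G`, and a
subsequence converges pointwise. The pseudometric axioms and the four-point condition are closed
conditions, and the rescaled hyperbolicity constants `δᵢ / ℓᵢ` tend to `0`, so the limit is a
`0`-hyperbolic pseudometric.
-/

open Filter

noncomputable def GromovProd {X : Type*} (d : X → X → ℝ) (x y w : X) : ℝ :=
  (d x w + d y w - d x y) / 2

def IsPseudoMetric {X : Type*} (d : X → X → ℝ) : Prop :=
  (∀ x, d x x = 0) ∧ (∀ x y, d x y = d y x) ∧ ∀ x y z, d x z ≤ d x y + d y z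

def IsDeltaHyp {X : Type*} (d : X → X → ℝ) (δ : ℝ) : Prop :=
  ∀ x y z w : X,
    min (GromovProd d x z w) (GromovProd d y z w) - δ ≤ GromovProd d x y w

def IsEquivariant {G : Type*} [Group G] (d : G → G → ℝ) : Prop :=
  ∀ g x y : G, d (g * x) (g * y) = d x y

open Topology

namespace IsPseudoMetric

variable {X : Type*} {d : X → X → ℝ}

theorem nonneg (hd : IsPseudoMetric d) (x y : X) : 0 ≤ d x y := by
  have h := hd.2.2 x y x
  rw [hd.1, hd.2.1 y x] at h
  linarith

theorem triangle_left (hd : IsPseudoMetric d) (x y w : X) : d x y ≤ d w x + d w y := by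
  rw [hd.2.1 w x]
  exact hd.2.2 x w y

theorem div_const (hd : IsPseudoMetric d) {c : ℝ} (hc : 0 ≤ c) :
    IsPseudoMetric fun x y => d x y / c := by
  refine ⟨fun x => ?_, fun x y => ?_, fun x y z => ?_⟩
  · simp only [hd.1, zero_div]
  · simp only [hd.2.1 x y]
  simp only [← add_div]
  exact div_le_div_of_nonneg_right (hd.2.2 x y z) hc

theorem of_tendsto {ι : Type*} {l : Filter ι} [l.NeBot] {f : ι → X → X → ℝ}
    (hf : ∀ i, IsPseudoMetric (f i)) (hlim : ∀ x y, Tendsto (fun i => f i x y) l (𝓝 (d x y))) :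
    IsPseudoMetric d := by
  refine ⟨fun x => ?_, fun x y => ?_, fun x y z => ?_⟩
  · refine tendsto_nhds_unique (hlim x x) ?_
    simp only [fun i => (hf i).1 x, tendsto_const_nhds]
  · exact tendsto_nhds_unique (hlim x y) ((hlim y x).congr fun i => (hf i).2.1 y x)
  · exact le_of_tendsto_of_tendsto' (hlim x z) ((hlim x y).add (hlim y z))
      fun i => (hf i).2.2 x y z

end IsPseudoMetric

theorem gromovProd_div_const {X : Type*} (d : X → X → ℝ) (c : ℝ) (x y w : X) :
    GromovProd (fun x y => d x y / c) x y w = GromovProd d x y w / c := by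
  simp only [GromovProd]
  ring

theorem tendsto_gromovProd {X ι : Type*} {l : Filter ι} {f : ι → X → X → ℝ} {d : X → X → ℝ}
    (hlim : ∀ x y, Tendsto (fun i => f i x y) l (𝓝 (d x y))) (x y w : X) :
    Tendsto (fun i => GromovProd (f i) x y w) l (𝓝 (GromovProd d x y w)) :=
  (((hlim x w).add (hlim y w)).sub (hlim x y)).div_const 2

namespace IsDeltaHyp

variable {X : Type*} {d : X → X → ℝ} {δ : ℝ}

theorem div_const (hd : IsDeltaHyp d δ) {c : ℝ} (hc : 0 ≤ c) :
    IsDeltaHyp (fun x y => d x y / c) (δ / c) := by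
  intro x y z w
  simp only [gromovProd_div_const]
  rw [min_div_div_right hc, ← sub_div]
  exact div_le_div_of_nonneg_right (hd x y z w) hc

theorem of_tendsto {ι : Type*} {l : Filter ι} [l.NeBot] {f : ι → X → X → ℝ} {δs : ι → ℝ}
    (hf : ∀ i, IsDeltaHyp (f i) (δs i)) (hδ : Tendsto δs l (𝓝 δ))
    (hlim : ∀ x y, Tendsto (fun i => f i x y) l (𝓝 (d x y))) : IsDeltaHyp d δ :=
  fun x y z w => le_of_tendsto_of_tendsto'
    (((tendsto_gromovProd hlim x z w).min (tendsto_gromovProd hlim y z w)).sub hδ)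
    (tendsto_gromovProd hlim x y w) fun i => hf i x y z w

end IsDeltaHyp

namespace IsEquivariant

variable {G : Type*} [Group G] {d : G → G → ℝ}

theorem dist_mul_right (h : IsEquivariant d) (x y : G) : d x (x * y) = d 1 y := by
  simpa using h x 1 y

theorem dist_one_inv (h : IsEquivariant d) (hd : IsPseudoMetric d) (g : G) :
    d 1 g⁻¹ = d 1 g := by
  rw [← h.dist_mul_right g g⁻¹, mul_inv_cancel, hd.2.1]

theorem dist_one_mul_le (h : IsEquivariant d) (hd : IsPseudoMetric d) (x y : G) :
    d 1 (x * y) ≤ d 1 x + d 1 y :=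
  h.dist_mul_right x y ▸ hd.2.2 1 x (x * y)

end IsEquivariant

theorem exists_dist_one_le_mul_sum {ι G : Type*} [Group G] {S : Finset G} {d : ι → G → G → ℝ}
    (hpm : ∀ i, IsPseudoMetric (d i)) (heq : ∀ i, IsEquivariant (d i)) {g : G}
    (hg : g ∈ Subgroup.closure (S : Set G)) :
    ∃ C : ℝ, ∀ i, d i 1 g ≤ C * ∑ s ∈ S, d i 1 s := by
  induction hg using Subgroup.closure_induction with
  | mem s hs =>
    refine ⟨1, fun i => ?_⟩
    rw [one_mul]
    exact Finset.single_le_sum (fun t _ => (hpm i).nonneg 1 t) hs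
  | one => exact ⟨0, fun i => by rw [(hpm i).1, zero_mul]⟩
  | mul x y _ _ ihx ihy =>
    obtain ⟨Cx, hx⟩ := ihx
    obtain ⟨Cy, hy⟩ := ihy
    refine ⟨Cx + Cy, fun i => ?_⟩
    calc d i 1 (x * y) ≤ d i 1 x + d i 1 y := (heq i).dist_one_mul_le (hpm i) x y
      _ ≤ Cx * ∑ s ∈ S, d i 1 s + Cy * ∑ s ∈ S, d i 1 s := add_le_add (hx i) (hy i)
      _ = (Cx + Cy) * ∑ s ∈ S, d i 1 s := by ring
  | inv x _ ih =>
    obtain ⟨C, hC⟩ := ih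
    exact ⟨C, fun i => ((heq i).dist_one_inv (hpm i) x).symm ▸ hC i⟩

theorem Subgroup.countable_of_closure_eq_top {G : Type*} [Group G] {s : Set G}
    (hs : s.Countable) (h : Subgroup.closure s = ⊤) : Countable G := by
  have := hs.to_subtype
  refine (FreeGroup.lift_surjective_iff_closure_range_eq_top
    (f := ((↑) : s → G))).2 ?_ |>.countable
  rwa [Subtype.range_coe]

theorem exists_subseq_tendsto_of_forall_mem_Icc {ι : Type*} [Countable ι] {u : ℕ → ι → ℝ}
    {a b : ι → ℝ} (hu : ∀ n i, u n i ∈ Set.Icc (a i) (b i)) :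
    ∃ φ : ℕ → ℕ, StrictMono φ ∧ ∃ v : ι → ℝ, ∀ i,
      Tendsto (fun k => u (φ k) i) atTop (𝓝 (v i)) := by
  obtain ⟨v, -, φ, hφ, hv⟩ := (isCompact_univ_pi fun i => isCompact_Icc (a := a i) (b := b i))
    |>.isSeqCompact fun n => Set.mem_univ_pi.2 (hu n)
  exact ⟨φ, hφ, v, tendsto_pi_nhds.1 hv⟩

theorem rescaled_pseudometrics_subseq_converge_zeroHyp_general
    (G : Type) [Group G] (S : Finset G) (hS : Subgroup.closure (S : Set G) = ⊤)
    (d : ℕ → G → G → ℝ) (δ : ℕ → ℝ) (ℓ : ℕ → ℝ)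
    (hpm : ∀ i, IsPseudoMetric (d i)) (heq : ∀ i, IsEquivariant (d i))
    (hhyp : ∀ i, IsDeltaHyp (d i) (δ i))
    (hℓ : ∀ i, ℓ i = ∑ s ∈ S, d i 1 s) (hpos : ∀ i, 0 < ℓ i)
    (hdom : Tendsto (fun i => δ i / ℓ i) atTop (nhds 0)) :
    ∃ φ : ℕ → ℕ, StrictMono φ ∧ ∃ D : G → G → ℝ,
      IsPseudoMetric D ∧ IsDeltaHyp D 0 ∧
      ∀ x y : G,
        Tendsto (fun k => d (φ k) x y / ℓ (φ k)) atTop (nhds (D x y)) := by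
  have := Subgroup.countable_of_closure_eq_top S.countable_toSet hS
  have hbound (g : G) : ∃ C : ℝ, ∀ i, d i 1 g ≤ C * ℓ i := by
    simpa only [hℓ] using exists_dist_one_le_mul_sum hpm heq (hS ▸ Subgroup.mem_top g)
  choose C hC using hbound
  have hmem (i : ℕ) (p : G × G) : d i p.1 p.2 / ℓ i ∈ Set.Icc 0 (C p.1 + C p.2) := by
    refine ⟨div_nonneg ((hpm i).nonneg _ _) (hpos i).le, (div_le_iff₀ (hpos i)).2 ?_⟩
    linarith [(hpm i).triangle_left p.1 p.2 1, hC p.1 i, hC p.2 i]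
  obtain ⟨φ, hφ, D, hD⟩ := exists_subseq_tendsto_of_forall_mem_Icc hmem
  have hlim (x y : G) := hD (x, y)
  refine ⟨φ, hφ, fun x y => D (x, y), ?_, ?_, hlim⟩
  · exact IsPseudoMetric.of_tendsto (fun k => (hpm (φ k)).div_const (hpos (φ k)).le) hlim
  · exact IsDeltaHyp.of_tendsto (fun k => (hhyp (φ k)).div_const (hpos (φ k)).le)
      (hdom.comp hφ.tendsto_atTop) hlim

/-- Corollary 5.4: for a finitely generated group `G` and a sequence of
equivariant `δᵢ`-hyperbolic pseudometrics `dᵢ` with lengths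
`ℓᵢ = ∑_{s ∈ S} dᵢ(1,s)` dominating the hyperbolicity constants
(`δᵢ/ℓᵢ → 0`), the rescaled pseudometrics `dᵢ/ℓᵢ` have a subsequence converging
pointwise to a `0`-hyperbolic pseudometric. -/
theorem rescaled_pseudometrics_subseq_converge_zeroHyp
    (G : Type) [Group G] (S : Finset G) (hS : Subgroup.closure (S : Set G) = ⊤)
    (d : ℕ → G → G → ℝ) (δ : ℕ → ℝ) (ℓ : ℕ → ℝ)
    (hpm : ∀ i, IsPseudoMetric (d i)) (heq : ∀ i, IsEquivariant (d i))
    (hδ : ∀ i, 0 ≤ δ i) (hhyp : ∀ i, IsDeltaHyp (d i) (δ i))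
    (hℓ : ∀ i, ℓ i = ∑ s ∈ S, d i 1 s) (hpos : ∀ i, 0 < ℓ i)
    (hdom : Tendsto (fun i => δ i / ℓ i) atTop (nhds 0)) :
    ∃ φ : ℕ → ℕ, StrictMono φ ∧ ∃ D : G → G → ℝ,
      IsPseudoMetric D ∧ IsDeltaHyp D 0 ∧
      ∀ x y : G,
        Tendsto (fun k => d (φ k) x y / ℓ (φ k)) atTop (nhds (D x y)) :=
  rescaled_pseudometrics_subseq_converge_zeroHyp_general G S hS d δ ℓ hpm heq hhyp hℓ hpos hdom
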